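/- arXiv:math/9909159 — 9 statements merged into one kernel-verified Lean document; each statement's English description precedes it below -/
import Mathlib

section
/- For every θ ∈ (−π/2, π/2) and every real λ one has the factorization −2·tan θ + 12·(sec θ)^{2/3}·λ − 64·λ³ = −64·(λ − r₁(θ))·(λ − r₂(θ))·(λ − r₃(θ)), and moreover the three roots are real and distinct with r₁(θ) < r₂(θ) < r₃(θ). -/
open Real

/-- `sec θ = (cos θ)⁻¹`. -/
noncomputable def sec (θ : ℝ) : ℝ := (Real.cos θ)⁻¹

/-- `r₁(θ) = (1/2)·sin(θ/3 − 2π/3)·(sec θ)^{1/3}`. -/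
noncomputable def r₁ (θ : ℝ) : ℝ :=
  (1/2) * Real.sin (θ/3 - 2*π/3) * (sec θ) ^ ((1:ℝ)/3)

/-- `r₂(θ) = (1/2)·sin(θ/3)·(sec θ)^{1/3}`. -/
noncomputable def r₂ (θ : ℝ) : ℝ :=
  (1/2) * Real.sin (θ/3) * (sec θ) ^ ((1:ℝ)/3)

/-- `r₃(θ) = (1/2)·sin(θ/3 + 2π/3)·(sec θ)^{1/3}`. -/
noncomputable def r₃ (θ : ℝ) : ℝ :=
  (1/2) * Real.sin (θ/3 + 2*π/3) * (sec θ) ^ ((1:ℝ)/3)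

/-- The cubic `−2 tan θ + 12 (sec θ)^{2/3} λ − 64 λ³` factors as
`−64 (λ − r₁(θ))(λ − r₂(θ))(λ − r₃(θ))`, and its three real roots are
distinct with `r₁(θ) < r₂(θ) < r₃(θ)`. -/
theorem cubic_factorization (θ : ℝ) (hθ : θ ∈ Set.Ioo (-(π/2)) (π/2)) :
    (∀ lam : ℝ,
      -2 * Real.tan θ + 12 * (sec θ) ^ ((2:ℝ)/3) * lam - 64 * lam ^ 3
        = -64 * (lam - r₁ θ) * (lam - r₂ θ) * (lam - r₃ θ))
    ∧ r₁ θ < r₂ θ ∧ r₂ θ < r₃ θ := by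
  obtain ⟨h1, h2⟩ := hθ
  have hcos : 0 < Real.cos θ := Real.cos_pos_of_mem_Ioo ⟨h1, h2⟩
  have hsec : 0 < sec θ := by simpa [sec] using inv_pos.mpr hcos
  set c : ℝ := (sec θ) ^ ((1:ℝ)/3) with hc
  have hcpos : 0 < c := Real.rpow_pos_of_pos hsec _
  have hc3 : c ^ 3 = sec θ := by
    rw [hc, ← Real.rpow_natCast ((sec θ) ^ ((1:ℝ)/3)) 3, ← Real.rpow_mul hsec.le]
    norm_num
  have hc2 : (sec θ) ^ ((2:ℝ)/3) = c ^ 2 := by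
    rw [hc, ← Real.rpow_natCast ((sec θ) ^ ((1:ℝ)/3)) 2, ← Real.rpow_mul hsec.le]
    norm_num
  set s : ℝ := Real.sin (θ/3) with hs
  set co : ℝ := Real.cos (θ/3) with hco
  have hpyth : s ^ 2 + co ^ 2 = 1 := by
    simpa [hs, hco] using Real.sin_sq_add_cos_sq (θ/3)
  have h3 : Real.sqrt 3 ^ 2 = 3 := Real.sq_sqrt (by norm_num)
  have hsin23 : Real.sin (2*π/3) = Real.sqrt 3 / 2 := by
    rw [show (2*π/3) = π - π/3 by ring, Real.sin_pi_sub, Real.sin_pi_div_three]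
  have hcos23 : Real.cos (2*π/3) = -(1/2) := by
    rw [show (2*π/3) = π - π/3 by ring, Real.cos_pi_sub, Real.cos_pi_div_three]
  have hs1 : Real.sin (θ/3 - 2*π/3) = -(1/2) * s - Real.sqrt 3 / 2 * co := by
    rw [Real.sin_sub, hsin23, hcos23]; ring
  have hs3 : Real.sin (θ/3 + 2*π/3) = -(1/2) * s + Real.sqrt 3 / 2 * co := by
    rw [Real.sin_add, hsin23, hcos23]; ring
  have hsinθ : Real.sin θ = 3 * s - 4 * s ^ 3 := by
    rw [show θ = 3 * (θ/3) by ring]; exact Real.sin_three_mul _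
  have htan : Real.tan θ = (3 * s - 4 * s ^ 3) * c ^ 3 := by
    rw [Real.tan_eq_sin_div_cos, hsinθ, hc3, sec, div_eq_mul_inv]
  -- bounds
  have hx1 : -(π/6) < θ/3 := by linarith
  have hx2 : θ/3 < π/6 := by linarith
  have hpi : 0 < π := Real.pi_pos
  have hslo : -(1/2) < s := by
    have := Real.sin_lt_sin_of_lt_of_le_pi_div_two (x := -(π/6)) (y := θ/3)
      (by linarith) (by linarith) hx1
    rw [Real.sin_neg, Real.sin_pi_div_six] at this
    linarith [this]
  have hshi : s < 1/2 := by
    have := Real.sin_lt_sin_of_lt_of_le_pi_div_two (x := θ/3) (y := π/6)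
      (by linarith) (by linarith) hx2
    rw [Real.sin_pi_div_six] at this
    exact this
  have hcohi : Real.sqrt 3 / 2 < co := by
    have habs : |θ/3| < π/6 := abs_lt.mpr ⟨hx1, hx2⟩
    have := Real.cos_lt_cos_of_nonneg_of_le_pi (x := |θ/3|) (y := π/6)
      (abs_nonneg _) (by linarith) habs
    rw [Real.cos_abs] at this
    rw [Real.cos_pi_div_six] at this
    linarith
  have hsqrt3 : 0 < Real.sqrt 3 := Real.sqrt_pos.mpr (by norm_num)
  refine ⟨fun lam => ?_, ?_, ?_⟩
  · rw [r₁, r₂, r₃, hs1, hs3, htan, hc2, ← hc, ← hs]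
    have hA : ((-(1/2) * s - Real.sqrt 3 / 2 * co) + s + (-(1/2) * s + Real.sqrt 3 / 2 * co)) = 0 := by ring
    have hB : ((-(1/2) * s - Real.sqrt 3 / 2 * co) * s + s * (-(1/2) * s + Real.sqrt 3 / 2 * co)
        + (-(1/2) * s - Real.sqrt 3 / 2 * co) * (-(1/2) * s + Real.sqrt 3 / 2 * co)) = -(3/4) := by
      linear_combination (-(3/4)) * hpyth + (-(co^2)/4) * h3
    have hC : (-(1/2) * s - Real.sqrt 3 / 2 * co) * s * (-(1/2) * s + Real.sqrt 3 / 2 * co)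
        = -(1/4) * (3 * s - 4 * s ^ 3) := by
      linear_combination (-(3/4) * s) * hpyth + (-(s * co^2) / 4) * h3
    linear_combination (-32 * c * lam^2) * hA + (16 * c^2 * lam) * hB + (-8 * c^3) * hC
  · rw [r₁, r₂, hs1, ← hc, ← hs]
    have hsc : 3/2 < Real.sqrt 3 * co := by
      nlinarith [mul_lt_mul_of_pos_left hcohi hsqrt3, h3]
    have hlt : (1/2) * (-(1/2) * s - Real.sqrt 3 / 2 * co) < (1/2) * s := by linarith
    exact mul_lt_mul_of_pos_right hlt hcpos
  · rw [r₂, r₃, hs3, ← hc, ← hs]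
    have hsc : 3/2 < Real.sqrt 3 * co := by
      nlinarith [mul_lt_mul_of_pos_left hcohi hsqrt3, h3]
    have hlt : (1/2) * s < (1/2) * (-(1/2) * s + Real.sqrt 3 / 2 * co) := by linarith
    exact mul_lt_mul_of_pos_right hlt hcpos
end

section
/- For every θ ∈ (−π/2, π/2), the function a ↦ ((r₃(θ)−a)(a−r₂(θ))(a−r₁(θ)))^{−1/2} is integrable on the open interval (r₂(θ), r₃(θ)), the function a ↦ ((r₃(θ)−a)(r₂(θ)−a)(a−r₁(θ)))^{−1/2} is integrable on the open interval (r₁(θ), r₂(θ)), both ρ₊(θ) and ρ₋(θ) are strictly positive, and ρ₊(−θ) = ρ₋(θ). -/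
open Real MeasureTheory

/-- `ρ₊(θ)`, a Lebesgue integral over the open interval `(r₂(θ), r₃(θ))`. -/
noncomputable def ρp (θ : ℝ) : ℝ :=
  (1/8) * ∫ a in Set.Ioo (r₂ θ) (r₃ θ),
    ((r₃ θ - a) * (a - r₂ θ) * (a - r₁ θ)) ^ (-(1:ℝ)/2)

/-- `ρ₋(θ)`, a Lebesgue integral over the open interval `(r₁(θ), r₂(θ))`. -/
noncomputable def ρm (θ : ℝ) : ℝ :=
  (1/8) * ∫ a in Set.Ioo (r₁ θ) (r₂ θ),
    ((r₃ θ - a) * (r₂ θ - a) * (a - r₁ θ)) ^ (-(1:ℝ)/2)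

/- ### Auxiliary lemmas -/

lemma aux_int_left {p t : ℝ} (hpt : p ≤ t) :
    IntegrableOn (fun a : ℝ => (a - p) ^ (-(1:ℝ)/2)) (Set.Ioc p t) := by
  have h : IntervalIntegrable (fun x : ℝ => x ^ (-(1:ℝ)/2)) volume 0 (t - p) :=
    intervalIntegral.intervalIntegrable_rpow' (by norm_num)
  have h2 : IntervalIntegrable (fun x : ℝ => (x - p) ^ (-(1:ℝ)/2)) volume p t := by
    simpa using h.comp_sub_right p
  rwa [intervalIntegrable_iff_integrableOn_Ioc_of_le hpt] at h2

lemma aux_int_right {t q : ℝ} (htq : t ≤ q) :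
    IntegrableOn (fun a : ℝ => (q - a) ^ (-(1:ℝ)/2)) (Set.Ioo t q) := by
  have h : IntervalIntegrable (fun x : ℝ => x ^ (-(1:ℝ)/2)) volume (q - t) 0 :=
    intervalIntegral.intervalIntegrable_rpow' (by norm_num)
  have h2 : IntervalIntegrable (fun x : ℝ => (q - x) ^ (-(1:ℝ)/2)) volume t q := by
    simpa using h.comp_sub_left q
  rw [intervalIntegrable_iff_integrableOn_Ioc_of_le htq] at h2
  exact h2.mono_set Set.Ioo_subset_Ioc_self

/-- Key lemma: integrability and positivity for `(c a * ((q-a)*(a-p)))^{-1/2}` on `(p,q)`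
when `c` is continuous and positive on `[p,q]`. -/
lemma key_lemma {p q : ℝ} (hpq : p < q) {c : ℝ → ℝ} (hc : ContinuousOn c (Set.Icc p q))
    (hcpos : ∀ x ∈ Set.Icc p q, 0 < c x) :
    IntegrableOn (fun a : ℝ => (c a * ((q - a) * (a - p))) ^ (-(1:ℝ)/2)) (Set.Ioo p q) ∧
    0 < ∫ a in Set.Ioo p q, (c a * ((q - a) * (a - p))) ^ (-(1:ℝ)/2) := by
  set t : ℝ := (p + q) / 2 with ht
  have hpt : p < t := by rw [ht]; linarith
  have htq : t < q := by rw [ht]; linarith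
  obtain ⟨x₀, hx₀, hmin⟩ := isCompact_Icc.exists_isMinOn
    ⟨p, Set.left_mem_Icc.2 hpq.le⟩ hc
  set m : ℝ := c x₀ with hm
  have hm0 : 0 < m := hcpos _ hx₀
  have hmle : ∀ x ∈ Set.Icc p q, m ≤ c x := fun x hx => hmin hx
  set f : ℝ → ℝ := fun a => (c a * ((q - a) * (a - p))) ^ (-(1:ℝ)/2) with hf
  have hmeas : ∀ s : Set ℝ, MeasurableSet s → s ⊆ Set.Icc p q →
      AEStronglyMeasurable f (volume.restrict s) := by
    intro s hms hsub
    have h1 : AEMeasurable c (volume.restrict s) := (hc.mono hsub).aemeasurable hms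
    have h2 : AEMeasurable f (volume.restrict s) := by
      rw [hf]; fun_prop
    exact h2.aestronglyMeasurable
  -- integrability on Ioc p t
  have hA : IntegrableOn f (Set.Ioc p t) := by
    refine Integrable.mono' ((aux_int_left hpt.le).const_mul ((m * (q - t)) ^ (-(1:ℝ)/2)))
      (hmeas _ measurableSet_Ioc (fun a ha => ⟨ha.1.le, ha.2.trans htq.le⟩))
      (((ae_restrict_iff' measurableSet_Ioc).2 (ae_of_all _ ?_)))
    intro a ha
    have haIcc : a ∈ Set.Icc p q := ⟨ha.1.le, ha.2.trans htq.le⟩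
    have h1 : 0 < a - p := by linarith [ha.1]
    have h2 : 0 < q - t := by linarith
    have h3 : q - t ≤ q - a := by linarith [ha.2]
    have hy : 0 < m * (q - t) * (a - p) := by positivity
    have hxy : m * (q - t) * (a - p) ≤ c a * ((q - a) * (a - p)) := by
      have hca := hmle a haIcc
      have hstep : m * (q - t) ≤ c a * (q - a) :=
        mul_le_mul hca h3 h2.le (hm0.le.trans hca)
      calc m * (q - t) * (a - p) ≤ c a * (q - a) * (a - p) :=
            mul_le_mul_of_nonneg_right hstep h1.le
        _ = c a * ((q - a) * (a - p)) := by ring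
    have hle : f a ≤ (m * (q - t) * (a - p)) ^ (-(1:ℝ)/2) :=
      Real.rpow_le_rpow_of_nonpos hy hxy (by norm_num)
    have hfnn : 0 ≤ f a := Real.rpow_nonneg (by nlinarith) _
    rw [Real.norm_of_nonneg hfnn]
    calc f a ≤ (m * (q - t) * (a - p)) ^ (-(1:ℝ)/2) := hle
      _ = (m * (q - t)) ^ (-(1:ℝ)/2) * (a - p) ^ (-(1:ℝ)/2) := by
          rw [Real.mul_rpow (by positivity) h1.le]
  -- integrability on Ioo t q
  have hB : IntegrableOn f (Set.Ioo t q) := by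
    refine Integrable.mono' ((aux_int_right htq.le).const_mul ((m * (t - p)) ^ (-(1:ℝ)/2)))
      (hmeas _ measurableSet_Ioo (fun a ha => ⟨(hpt.trans ha.1).le, ha.2.le⟩))
      (((ae_restrict_iff' measurableSet_Ioo).2 (ae_of_all _ ?_)))
    intro a ha
    have haIcc : a ∈ Set.Icc p q := ⟨(hpt.trans ha.1).le, ha.2.le⟩
    have h1 : 0 < q - a := by linarith [ha.2]
    have h2 : 0 < t - p := by linarith
    have h3 : t - p ≤ a - p := by linarith [ha.1]
    have hy : 0 < m * (t - p) * (q - a) := by positivity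
    have hxy : m * (t - p) * (q - a) ≤ c a * ((q - a) * (a - p)) := by
      have hca := hmle a haIcc
      have hstep : m * (t - p) ≤ c a * (a - p) :=
        mul_le_mul hca h3 h2.le (hm0.le.trans hca)
      calc m * (t - p) * (q - a) ≤ c a * (a - p) * (q - a) :=
            mul_le_mul_of_nonneg_right hstep h1.le
        _ = c a * ((q - a) * (a - p)) := by ring
    have hle : f a ≤ (m * (t - p) * (q - a)) ^ (-(1:ℝ)/2) :=
      Real.rpow_le_rpow_of_nonpos hy hxy (by norm_num)
    have hfnn : 0 ≤ f a := Real.rpow_nonneg (by nlinarith) _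
    rw [Real.norm_of_nonneg hfnn]
    calc f a ≤ (m * (t - p) * (q - a)) ^ (-(1:ℝ)/2) := hle
      _ = (m * (t - p)) ^ (-(1:ℝ)/2) * (q - a) ^ (-(1:ℝ)/2) := by
          rw [Real.mul_rpow (by positivity) h1.le]
  have hsub : Set.Ioo p q ⊆ Set.Ioc p t ∪ Set.Ioo t q := by
    intro a ha
    rcases le_or_gt a t with h | h
    · exact Or.inl ⟨ha.1, h⟩
    · exact Or.inr ⟨h, ha.2⟩
  have hInt : IntegrableOn f (Set.Ioo p q) := (hA.union hB).mono_set hsub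
  refine ⟨hInt, ?_⟩
  have hfpos : ∀ a ∈ Set.Ioo p q, 0 < f a := by
    intro a ha
    have : 0 < c a * ((q - a) * (a - p)) :=
      mul_pos (hcpos a ⟨ha.1.le, ha.2.le⟩)
        (mul_pos (by linarith [ha.2]) (by linarith [ha.1]))
    exact Real.rpow_pos_of_pos this _
  rw [setIntegral_pos_iff_support_of_nonneg_ae
    ((ae_restrict_iff' measurableSet_Ioo).2 (ae_of_all _ fun a ha => (hfpos a ha).le)) hInt]
  calc (0 : ENNReal) < volume (Set.Ioo p q) := by
        rw [Real.volume_Ioo]; exact ENNReal.ofReal_pos.2 (by linarith)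
    _ ≤ volume (Function.support f ∩ Set.Ioo p q) :=
        measure_mono fun a ha => ⟨(hfpos a ha).ne', ha⟩

lemma r_order {θ : ℝ} (hθ : θ ∈ Set.Ioo (-(π/2)) (π/2)) : r₁ θ < r₂ θ ∧ r₂ θ < r₃ θ := by
  obtain ⟨h1, h2⟩ := hθ
  have hπ := Real.pi_pos
  have hsec : 0 < (sec θ) ^ ((1:ℝ)/3) := by
    apply Real.rpow_pos_of_pos
    exact inv_pos.2 (Real.cos_pos_of_mem_Ioo ⟨h1, h2⟩)
  set x : ℝ := θ / 3 with hx
  have hx1 : -(π/6) < x := by rw [hx]; linarith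
  have hx2 : x < π/6 := by rw [hx]; linarith
  have mono := Real.strictMonoOn_sin
  have hmemx : x ∈ Set.Icc (-(π/2)) (π/2) := ⟨by linarith, by linarith⟩
  have hs2 : Real.sin x < 1/2 := by
    have := mono hmemx (Set.mem_Icc.2 ⟨by linarith, by linarith⟩) hx2
    simpa [Real.sin_pi_div_six] using this
  have hs2' : -(1/2) < Real.sin x := by
    have := mono (Set.mem_Icc.2 ⟨by linarith, by linarith⟩) hmemx hx1
    simpa [Real.sin_pi_div_six] using this
  have hs3 : 1/2 < Real.sin (x + 2*π/3) := by
    have heq : Real.sin (x + 2*π/3) = Real.sin (π/3 - x) := by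
      rw [← Real.sin_pi_sub]; ring_nf
    rw [heq]
    have := mono (Set.mem_Icc.2 ⟨by linarith, by linarith⟩)
      (Set.mem_Icc.2 ⟨by linarith, by linarith⟩) (show π/6 < π/3 - x by linarith)
    simpa [Real.sin_pi_div_six] using this
  have hs1 : Real.sin (x - 2*π/3) < -(1/2) := by
    have heq : Real.sin (x - 2*π/3) = -Real.sin (π/3 + x) := by
      rw [show x - 2*π/3 = -(2*π/3 - x) by ring, Real.sin_neg,
        show 2*π/3 - x = π - (π/3 + x) by ring, Real.sin_pi_sub]
    rw [heq]
    have := mono (Set.mem_Icc.2 ⟨by linarith, by linarith⟩)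
      (Set.mem_Icc.2 ⟨by linarith, by linarith⟩) (show π/6 < π/3 + x by linarith)
    rw [Real.sin_pi_div_six] at this
    linarith
  constructor
  · unfold r₁ r₂
    rw [← hx]
    exact mul_lt_mul_of_pos_right (by linarith) hsec
  · unfold r₂ r₃
    rw [← hx]
    exact mul_lt_mul_of_pos_right (by linarith) hsec

lemma r1_neg (θ : ℝ) : r₁ (-θ) = - r₃ θ := by
  unfold r₁ r₃ sec
  rw [Real.cos_neg, show -θ/3 - 2*π/3 = -(θ/3 + 2*π/3) by ring, Real.sin_neg]
  ring

lemma r2_neg (θ : ℝ) : r₂ (-θ) = - r₂ θ := by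
  unfold r₂ sec
  rw [Real.cos_neg, show -θ/3 = -(θ/3) by ring, Real.sin_neg]
  ring

lemma r3_neg (θ : ℝ) : r₃ (-θ) = - r₁ θ := by
  unfold r₃ r₁ sec
  rw [Real.cos_neg, show -θ/3 + 2*π/3 = -(θ/3 - 2*π/3) by ring, Real.sin_neg]
  ring

/-- The integrands defining `ρ₊` and `ρ₋` are integrable on the respective
open intervals, `ρ₊(θ)` and `ρ₋(θ)` are strictly positive, and
`ρ₊(−θ) = ρ₋(θ)`. -/
theorem rho_integrable_pos_symm (θ : ℝ) (hθ : θ ∈ Set.Ioo (-(π/2)) (π/2)) :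
    IntegrableOn (fun a : ℝ => ((r₃ θ - a) * (a - r₂ θ) * (a - r₁ θ)) ^ (-(1:ℝ)/2))
      (Set.Ioo (r₂ θ) (r₃ θ))
    ∧ IntegrableOn (fun a : ℝ => ((r₃ θ - a) * (r₂ θ - a) * (a - r₁ θ)) ^ (-(1:ℝ)/2))
      (Set.Ioo (r₁ θ) (r₂ θ))
    ∧ 0 < ρp θ ∧ 0 < ρm θ ∧ ρp (-θ) = ρm θ := by
  obtain ⟨h12, h23⟩ := r_order hθ
  have h13 : r₁ θ < r₃ θ := h12.trans h23
  -- rewrite the integrands into the shape of `key_lemma`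
  have ep : (fun a : ℝ => ((r₃ θ - a) * (a - r₂ θ) * (a - r₁ θ)) ^ (-(1:ℝ)/2))
      = fun a : ℝ => ((a - r₁ θ) * ((r₃ θ - a) * (a - r₂ θ))) ^ (-(1:ℝ)/2) := by
    funext a; congr 1; ring
  have em : (fun a : ℝ => ((r₃ θ - a) * (r₂ θ - a) * (a - r₁ θ)) ^ (-(1:ℝ)/2))
      = fun a : ℝ => ((r₃ θ - a) * ((r₂ θ - a) * (a - r₁ θ))) ^ (-(1:ℝ)/2) := by
    funext a; congr 1; ring
  obtain ⟨hIp, hPp⟩ := key_lemma h23 (c := fun a => a - r₁ θ)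
    ((continuous_id.sub continuous_const).continuousOn)
    (fun x hx => by have := hx.1; show (0:ℝ) < x - r₁ θ; linarith)
  obtain ⟨hIm, hPm⟩ := key_lemma h12 (c := fun a => r₃ θ - a)
    ((continuous_const.sub continuous_id).continuousOn)
    (fun x hx => by have := hx.2; show (0:ℝ) < r₃ θ - x; linarith)
  refine ⟨by rw [ep]; exact hIp, by rw [em]; exact hIm, ?_, ?_, ?_⟩
  · unfold ρp
    rw [ep]
    exact mul_pos (by norm_num) hPp
  · unfold ρm
    rw [em]
    exact mul_pos (by norm_num) hPm
  · unfold ρp ρm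
    congr 1
    rw [r1_neg, r2_neg, r3_neg]
    set F : ℝ → ℝ := fun a => ((-r₁ θ - a) * (a - -r₂ θ) * (a - -r₃ θ)) ^ (-(1:ℝ)/2) with hF
    have key : (∫ x in (r₁ θ)..(r₂ θ), F (-x)) = ∫ x in (-r₂ θ)..(-r₁ θ), F x :=
      intervalIntegral.integral_comp_neg F
    rw [← integral_Ioc_eq_integral_Ioo,
      ← intervalIntegral.integral_of_le (neg_le_neg h12.le), ← key,
      intervalIntegral.integral_of_le h12.le, integral_Ioc_eq_integral_Ioo]
    refine setIntegral_congr_fun measurableSet_Ioo fun a _ => ?_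
    show ((-r₁ θ - -a) * (-a - -r₂ θ) * (-a - -r₃ θ)) ^ (-(1:ℝ)/2) = _
    congr 1; ring
end

section
/- Fix θ ∈ (−π/2, π/2). If f : ℝ → ℝ is twice differentiable with f''(x) = 6·(sec θ)^{2/3} − 96·f(x)² for all x, f(0) = r₂(θ) and f'(0) = 0, then r₂(θ) ≤ f(x) ≤ r₃(θ) for all x ∈ ℝ. Likewise, if g : ℝ → ℝ is twice differentiable with g''(y) = −6·(sec θ)^{2/3} + 96·g(y)² for all y, g(0) = r₂(θ) and g'(0) = 0, then r₁(θ) ≤ g(y) ≤ r₂(θ) for all y ∈ ℝ. -/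
open Real

/-!
Both equations have the conserved energy `u'² - 2 V(u)` with `V' = u''`. Since `u(0) = r₂`
and `u'(0) = 0`, this gives `f'² = -64 (f - r₁)(f - r₂)(f - r₃)` and
`g'² = 64 (g - r₁)(g - r₂)(g - r₃)`.
Nonnegativity of the left side keeps `f` out of `(r₁, r₂) ∪ (r₃, ∞)` and `g` out of
`(-∞, r₁) ∪ (r₂, r₃)`; a continuous function starting at `r₂` cannot jump the gap next to `r₂`.
-/

theorem sq_deriv_sub_two_mul_comp_eq {f V V' : ℝ → ℝ} (hf : Differentiable ℝ f)
    (hf' : Differentiable ℝ (deriv f)) (hV : ∀ t, HasDerivAt V (V' t) t)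
    (hode : ∀ x, deriv (deriv f) x = V' (f x)) (x y : ℝ) :
    deriv f x ^ 2 - 2 * V (f x) = deriv f y ^ 2 - 2 * V (f y) := by
  have hE : ∀ z, HasDerivAt (fun z => deriv f z ^ 2 - 2 * V (f z)) 0 z := fun z =>
    (((hf' z).hasDerivAt.pow 2).sub (((hV (f z)).comp z (hf z).hasDerivAt).const_mul 2)).congr_deriv
      (by rw [hode]; ring)
  exact is_const_of_deriv_eq_zero (fun z => (hE z).differentiableAt) (fun z => (hE z).deriv) x y

theorem mem_Icc_of_forall_cubic_nonpos {f : ℝ → ℝ} (hf : Continuous f) {a b c x₀ : ℝ}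
    (hab : a < b) (hbc : b < c) (hx₀ : f x₀ = b)
    (hcubic : ∀ x, (f x - a) * (f x - b) * (f x - c) ≤ 0) (x : ℝ) : f x ∈ Set.Icc b c := by
  constructor
  · by_contra! hxb
    -- On its way from `f x < b` to `b`, `f` crosses the gap `(a, b)`, where the cubic is positive.
    set m := max (f x) ((a + b) / 2)
    obtain ⟨y, hy⟩ : m ∈ Set.range f :=
      (isPreconnected_range hf).Icc_subset ⟨x, rfl⟩ ⟨x₀, hx₀⟩
        ⟨le_max_left _ _, max_le hxb.le (by linarith)⟩
    have ham : a < m := lt_max_of_lt_right (by linarith)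
    have hmb : m < b := max_lt hxb (by linarith)
    have := hcubic y
    rw [hy] at this
    nlinarith [mul_pos (mul_pos (sub_pos.2 ham) (sub_pos.2 hmb)) (sub_pos.2 (hmb.trans hbc))]
  · by_contra! hcx
    have := hcubic x
    nlinarith [mul_pos (mul_pos (sub_pos.2 (hab.trans (hbc.trans hcx))) (sub_pos.2 (hbc.trans hcx)))
      (sub_pos.2 hcx)]

theorem mem_Icc_of_forall_cubic_nonneg {f : ℝ → ℝ} (hf : Continuous f) {a b c x₀ : ℝ}
    (hab : a < b) (hbc : b < c) (hx₀ : f x₀ = b)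
    (hcubic : ∀ x, 0 ≤ (f x - a) * (f x - b) * (f x - c)) (x : ℝ) : f x ∈ Set.Icc a b := by
  have h : -f x ∈ Set.Icc (-b) (-a) :=
    mem_Icc_of_forall_cubic_nonpos (f := fun x => -f x) (x₀ := x₀) hf.neg (neg_lt_neg hbc)
      (neg_lt_neg hab) (by simp [hx₀]) (fun x => by nlinarith [hcubic x]) x
  exact ⟨by linarith [h.2], by linarith [h.1]⟩

theorem sin_lt_sin_add_two_pi_div_three {x : ℝ} (hx : x + π / 3 ∈ Set.Ioo (-(π / 2)) (π / 2)) :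
    sin x < sin (x + 2 * π / 3) := by
  have hsin : 0 < sin (π / 3) := sin_pos_of_pos_of_lt_pi (by positivity) (by linarith [pi_pos])
  have hdiff := sin_sub_sin (x + 2 * π / 3) x
  rw [show (x + 2 * π / 3 - x) / 2 = π / 3 by ring,
    show (x + 2 * π / 3 + x) / 2 = x + π / 3 by ring] at hdiff
  nlinarith [mul_pos hsin (cos_pos_of_mem_Ioo hx)]

section Roots

variable {θ : ℝ} (hθ : θ ∈ Set.Ioo (-(π / 2)) (π / 2))
include hθ

theorem sec_pos_of_mem_Ioo : 0 < sec θ :=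
  inv_pos.2 (cos_pos_of_mem_Ioo hθ)

theorem r₁_lt_r₂ : r₁ θ < r₂ θ := by
  have hs := sin_lt_sin_add_two_pi_div_three (x := θ / 3 - 2 * π / 3)
    ⟨by linarith [hθ.1, pi_pos], by linarith [hθ.2, pi_pos]⟩
  rw [sub_add_cancel] at hs
  unfold r₁ r₂
  gcongr
  exact rpow_pos_of_pos (sec_pos_of_mem_Ioo hθ) _

theorem r₂_lt_r₃ : r₂ θ < r₃ θ := by
  have hs := sin_lt_sin_add_two_pi_div_three (x := θ / 3)
    ⟨by linarith [hθ.1, pi_pos], by linarith [hθ.2, pi_pos]⟩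
  unfold r₂ r₃
  gcongr
  exact rpow_pos_of_pos (sec_pos_of_mem_Ioo hθ) _

theorem cubic_eq_neg_mul_sub_r₁_mul_sub_r₂_mul_sub_r₃ (t : ℝ) :
    -2 * tan θ + 12 * sec θ ^ ((2:ℝ)/3) * t - 64 * t ^ 3
      = -64 * (t - r₁ θ) * (t - r₂ θ) * (t - r₃ θ) := by
  have hsec := sec_pos_of_mem_Ioo hθ
  set c := sec θ ^ ((1:ℝ)/3) with hc
  have hc3 : c ^ 3 = sec θ := by
    rw [hc, ← rpow_natCast, ← rpow_mul hsec.le]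
    norm_num
  have hc2 : c ^ 2 = sec θ ^ ((2:ℝ)/3) := by
    rw [hc, ← rpow_natCast, ← rpow_mul hsec.le]
    norm_num
  have hcos : cos (2 * π / 3) = -(1 / 2) := by
    rw [show 2 * π / 3 = π - π / 3 by ring, cos_pi_sub, cos_pi_div_three]
  have hsin : sin (2 * π / 3) = √3 / 2 := by
    rw [show 2 * π / 3 = π - π / 3 by ring, sin_pi_sub, sin_pi_div_three]
  have htan : tan θ = sin (3 * (θ / 3)) * c ^ 3 := by
    rw [hc3, mul_div_cancel₀ θ three_ne_zero, tan_eq_sin_div_cos, sec, div_eq_mul_inv]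
  rw [r₁, r₂, r₃, ← hc, htan, sin_three_mul, sin_sub, sin_add, hcos, hsin, ← hc2]
  linear_combination
    (2 * sin (θ / 3) * cos (θ / 3) ^ 2 * c ^ 3 - 4 * cos (θ / 3) ^ 2 * c ^ 2 * t) *
        Real.sq_sqrt (show (0:ℝ) ≤ 3 by norm_num)
      + (6 * sin (θ / 3) * c ^ 3 - 12 * c ^ 2 * t) * sin_sq_add_cos_sq (θ / 3)

theorem sq_deriv_eq_mul_cubic (σ : ℝ) {u : ℝ → ℝ} (hu : Differentiable ℝ u)
    (hu' : Differentiable ℝ (deriv u))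
    (hode : ∀ x, deriv (deriv u) x = σ * (6 * sec θ ^ ((2:ℝ)/3) - 96 * u x ^ 2))
    (h0 : u 0 = r₂ θ) (h0' : deriv u 0 = 0) (x : ℝ) :
    deriv u x ^ 2 = σ * (-64 * (u x - r₁ θ) * (u x - r₂ θ) * (u x - r₃ θ)) := by
  set k := sec θ ^ ((2:ℝ)/3)
  have henergy := sq_deriv_sub_two_mul_comp_eq hu hu'
    (V := fun t => σ * (6 * k * t - 32 * t ^ 3)) (V' := fun t => σ * (6 * k - 96 * t ^ 2))
    (fun t => (((hasDerivAt_id t).const_mul (6 * k) |>.sub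
      ((hasDerivAt_pow 3 t).const_mul 32)).const_mul σ).congr_deriv (by push_cast; ring)) hode x 0
  rw [h0, h0'] at henergy
  rw [← cubic_eq_neg_mul_sub_r₁_mul_sub_r₂_mul_sub_r₃ hθ]
  linear_combination henergy - σ * cubic_eq_neg_mul_sub_r₁_mul_sub_r₂_mul_sub_r₃ hθ (r₂ θ)

end Roots

/-- Solutions of the ODEs for `f` and `g` stay trapped between the roots:
`r₂(θ) ≤ f ≤ r₃(θ)` and `r₁(θ) ≤ g ≤ r₂(θ)`. -/
theorem solutions_bounded (θ : ℝ) (hθ : θ ∈ Set.Ioo (-(π/2)) (π/2)) :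
    (∀ f : ℝ → ℝ, Differentiable ℝ f → Differentiable ℝ (deriv f) →
      (∀ x, deriv (deriv f) x = 6 * (sec θ) ^ ((2:ℝ)/3) - 96 * (f x) ^ 2) →
      f 0 = r₂ θ → deriv f 0 = 0 →
      ∀ x, r₂ θ ≤ f x ∧ f x ≤ r₃ θ)
    ∧
    (∀ g : ℝ → ℝ, Differentiable ℝ g → Differentiable ℝ (deriv g) →
      (∀ y, deriv (deriv g) y = -6 * (sec θ) ^ ((2:ℝ)/3) + 96 * (g y) ^ 2) →
      g 0 = r₂ θ → deriv g 0 = 0 →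
      ∀ y, r₁ θ ≤ g y ∧ g y ≤ r₂ θ) := by
  constructor
  · intro f hf hf' hode h0 h0'
    refine mem_Icc_of_forall_cubic_nonpos hf.continuous (r₁_lt_r₂ hθ) (r₂_lt_r₃ hθ) h0 fun x => ?_
    have := sq_deriv_eq_mul_cubic hθ 1 hf hf' (fun x => (hode x).trans (one_mul _).symm) h0 h0' x
    nlinarith [sq_nonneg (deriv f x)]
  · intro g hg hg' hode h0 h0'
    refine mem_Icc_of_forall_cubic_nonneg hg.continuous (r₁_lt_r₂ hθ) (r₂_lt_r₃ hθ) h0 fun x => ?_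
    have := sq_deriv_eq_mul_cubic hθ (-1) hg hg' (fun x => by rw [hode]; ring) h0 h0' x
    nlinarith [sq_nonneg (deriv g x)]
end

section
/- Let f, g : ℝ → ℝ be smooth functions, neither of which is constant, such that f(x) > g(y) for all x, y ∈ ℝ and such that f''(x) − g''(y) = (f'(x)² + g'(y)²)/(f(x) − g(y)) − 32·(f(x) − g(y))² for all x, y ∈ ℝ. Then there exist real constants a₀, a₁, a₂ such that f'(x)² = 2·a₀ + 12·a₁·f(x) + 48·a₂·f(x)² − 64·f(x)³ for all x ∈ ℝ and g'(y)² = −2·a₀ − 12·a₁·g(y) − 48·a₂·g(y)² + 64·g(y)³ for all y ∈ ℝ. -/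
open Real

/-- Separation of variables for the PDE
`v_{xx} + v_{yy} = (v_x² + v_y²)/v − 32 v²` with `v(x,y) = f(x) − g(y) > 0`:
if `f` and `g` are smooth, nonconstant, with `f(x) > g(y)` everywhere and
`f''(x) − g''(y) = (f'(x)² + g'(y)²)/(f(x) − g(y)) − 32 (f(x) − g(y))²`,
then `f` and `g` satisfy Weierstrass-type first-order equations with a
common triple of constants. -/
theorem separation_of_variables (f g : ℝ → ℝ)
    (hf : ContDiff ℝ (⊤ : ℕ∞) f) (hg : ContDiff ℝ (⊤ : ℕ∞) g)
    (hfnc : ¬ ∃ c : ℝ, ∀ x, f x = c) (hgnc : ¬ ∃ c : ℝ, ∀ y, g y = c)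
    (hfg : ∀ x y, g y < f x)
    (hPDE : ∀ x y, deriv (deriv f) x - deriv (deriv g) y
      = ((deriv f x) ^ 2 + (deriv g y) ^ 2) / (f x - g y)
        - 32 * (f x - g y) ^ 2) :
    ∃ a₀ a₁ a₂ : ℝ,
      (∀ x, (deriv f x) ^ 2
        = 2 * a₀ + 12 * a₁ * f x + 48 * a₂ * (f x) ^ 2 - 64 * (f x) ^ 3)
      ∧ (∀ y, (deriv g y) ^ 2
        = -2 * a₀ - 12 * a₁ * g y - 48 * a₂ * (g y) ^ 2 + 64 * (g y) ^ 3) := by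
  have hf' : ContDiff ℝ ((⊤ : ℕ∞) : WithTop ℕ∞) f := hf.of_le (by simp)
  have hg' : ContDiff ℝ ((⊤ : ℕ∞) : WithTop ℕ∞) g := hg.of_le (by simp)
  have hfd : Differentiable ℝ f := hf.differentiable (by simp)
  have hgd : Differentiable ℝ g := hg.differentiable (by simp)
  have hf1 : ContDiff ℝ ((⊤ : ℕ∞) : WithTop ℕ∞) (deriv f) := (contDiff_infty_iff_deriv.mp hf').2
  have hg1 : ContDiff ℝ ((⊤ : ℕ∞) : WithTop ℕ∞) (deriv g) := (contDiff_infty_iff_deriv.mp hg').2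
  have hf1d : Differentiable ℝ (deriv f) := hf1.differentiable (by simp)
  have hg1d : Differentiable ℝ (deriv g) := hg1.differentiable (by simp)
  have hf2d : Differentiable ℝ (deriv (deriv f)) :=
    ((contDiff_infty_iff_deriv.mp hf1).2).differentiable (by simp)
  have hg2d : Differentiable ℝ (deriv (deriv g)) :=
    ((contDiff_infty_iff_deriv.mp hg1).2).differentiable (by simp)
  have hne : ∀ x y, f x - g y ≠ 0 := fun x y => sub_ne_zero.mpr (hfg x y).ne'
  -- Step A : clear the denominator
  have hA : ∀ x y, (deriv (deriv f) x - deriv (deriv g) y) * (f x - g y)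
      = (deriv f x) ^ 2 + (deriv g y) ^ 2 - 32 * (f x - g y) ^ 3 := by
    intro x y
    have h := hPDE x y
    have h0 := hne x y
    field_simp at h
    linear_combination h
  -- Step B : differentiate A in x
  have hB : ∀ x y,
      deriv (deriv (deriv f)) x * (f x - g y)
        + (deriv (deriv f) x - deriv (deriv g) y) * deriv f x
        - 2 * deriv f x * deriv (deriv f) x
        + 96 * (f x - g y) ^ 2 * deriv f x = 0 := by
    intro x y
    have h1 : HasDerivAt (fun t => deriv (deriv f) t - deriv (deriv g) y)
        (deriv (deriv (deriv f)) x) x := ((hf2d x).hasDerivAt).sub_const _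
    have h2 : HasDerivAt (fun t => f t - g y) (deriv f x) x :=
      ((hfd x).hasDerivAt).sub_const _
    have h3 := (hf1d x).hasDerivAt.pow 2
    have h4 := (h2.pow 3).const_mul (32 : ℝ)
    have Hd := (h1.mul h2).sub ((h3.add_const ((deriv g y) ^ 2)).sub h4)
    have Hz : (fun t => (deriv (deriv f) t - deriv (deriv g) y) * (f t - g y)
        - ((deriv f t) ^ 2 + (deriv g y) ^ 2 - 32 * (f t - g y) ^ 3))
        = fun _ => (0 : ℝ) := by
      funext t
      have := hA t y
      linarith
    have Hd := Hd.congr_of_eventuallyEq (f₁ := fun _ => (0 : ℝ)) (Filter.EventuallyEq.of_eq Hz.symm)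
    have := Hd.unique (hasDerivAt_const x 0)
    linear_combination this
  -- Step C : differentiate B in y
  have hC : ∀ x y,
      deriv (deriv (deriv f)) x * deriv g y + deriv (deriv (deriv g)) y * deriv f x
        + 192 * (f x - g y) * deriv f x * deriv g y = 0 := by
    intro x y
    have h1 : HasDerivAt (fun s => f x - g s) (-(deriv g y)) y :=
      ((hgd y).hasDerivAt).const_sub _
    have h2 := h1.const_mul (deriv (deriv (deriv f)) x)
    have h3 : HasDerivAt (fun s => deriv (deriv f) x - deriv (deriv g) s)
        (-(deriv (deriv (deriv g)) y)) y := ((hg2d y).hasDerivAt).const_sub _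
    have h4 := h3.mul_const (deriv f x)
    have h5 := ((h1.pow 2).const_mul (96 : ℝ)).mul_const (deriv f x)
    have Hd := ((h2.add h4).sub_const (2 * deriv f x * deriv (deriv f) x)).add h5
    have Hz : (fun s => (deriv (deriv (deriv f)) x * (f x - g s)
        + (deriv (deriv f) x - deriv (deriv g) s) * deriv f x
        - 2 * deriv f x * deriv (deriv f) x)
        + 96 * (f x - g s) ^ 2 * deriv f x) = fun _ => (0 : ℝ) := by
      funext s
      have := hB x s
      linarith
    have Hd := Hd.congr_of_eventuallyEq (f₁ := fun _ => (0 : ℝ)) (Filter.EventuallyEq.of_eq Hz.symm)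
    have := Hd.unique (hasDerivAt_const y 0)
    linear_combination -this
  -- nonconstancy gives points with nonzero derivative
  push_neg at hfnc hgnc
  obtain ⟨x₁, hx₁⟩ := hfnc (f 0)
  obtain ⟨y₁, hy₁⟩ := hgnc (g 0)
  obtain ⟨x₀, hx₀⟩ : ∃ x, deriv f x ≠ 0 := by
    by_contra h
    push_neg at h
    exact hx₁ (is_const_of_deriv_eq_zero hfd h x₁ 0)
  obtain ⟨y₀, hy₀⟩ : ∃ y, deriv g y ≠ 0 := by
    by_contra h
    push_neg at h
    exact hy₁ (is_const_of_deriv_eq_zero hgd h y₁ 0)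
  -- separation constant
  set c : ℝ := 192 * g y₀ - deriv (deriv (deriv g)) y₀ / deriv g y₀ with hc
  have hf3eq : ∀ x, deriv (deriv (deriv f)) x = (c - 192 * f x) * deriv f x := by
    intro x
    have h := hC x y₀
    have hcc : c * deriv g y₀ = 192 * g y₀ * deriv g y₀ - deriv (deriv (deriv g)) y₀ := by
      rw [hc]; field_simp
    have key : deriv g y₀ * (deriv (deriv (deriv f)) x - (c - 192 * f x) * deriv f x) = 0 := by
      linear_combination h - deriv f x * hcc
    rcases mul_eq_zero.mp key with h' | h'
    · exact absurd h' hy₀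
    · linarith
  have hg3eq : ∀ y, deriv (deriv (deriv g)) y = (192 * g y - c) * deriv g y := by
    intro y
    have h := hC x₀ y
    have h2 := hf3eq x₀
    have key : deriv f x₀ * (deriv (deriv (deriv g)) y - (192 * g y - c) * deriv g y)
        = 0 := by linear_combination h - deriv g y * h2
    rcases mul_eq_zero.mp key with h' | h'
    · exact absurd h' hx₀
    · linarith
  -- second integrals : P and Q constant
  have hP : ∀ x, deriv (deriv f) x - c * f x + 96 * (f x) ^ 2
      = deriv (deriv f) 0 - c * f 0 + 96 * (f 0) ^ 2 := by
    have hdiff : Differentiable ℝ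
        (fun x => deriv (deriv f) x - c * f x + 96 * (f x) ^ 2) :=
      (hf2d.sub (hfd.const_mul c)).add ((hfd.pow 2).const_mul 96)
    have hder : ∀ x, deriv
        (fun x => deriv (deriv f) x - c * f x + 96 * (f x) ^ 2) x = 0 := by
      intro x
      have Hd := ((hf2d x).hasDerivAt.sub
          (((hfd x).hasDerivAt).const_mul c)).add
          ((((hfd x).hasDerivAt).pow 2).const_mul (96 : ℝ))
      refine Hd.deriv.trans ?_
      linear_combination hf3eq x
    exact fun x => is_const_of_deriv_eq_zero hdiff hder x 0
  have hQ : ∀ y, deriv (deriv g) y + c * g y - 96 * (g y) ^ 2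
      = deriv (deriv g) 0 + c * g 0 - 96 * (g 0) ^ 2 := by
    have hdiff : Differentiable ℝ
        (fun y => deriv (deriv g) y + c * g y - 96 * (g y) ^ 2) :=
      (hg2d.add (hgd.const_mul c)).sub ((hgd.pow 2).const_mul 96)
    have hder : ∀ y, deriv
        (fun y => deriv (deriv g) y + c * g y - 96 * (g y) ^ 2) y = 0 := by
      intro y
      have Hd := ((hg2d y).hasDerivAt.add
          (((hgd y).hasDerivAt).const_mul c)).sub
          ((((hgd y).hasDerivAt).pow 2).const_mul (96 : ℝ))
      refine Hd.deriv.trans ?_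
      linear_combination hg3eq y
    exact fun y => is_const_of_deriv_eq_zero hdiff hder y 0
  set d₁ : ℝ := deriv (deriv f) 0 - c * f 0 + 96 * (f 0) ^ 2 with hd₁
  set d₂ : ℝ := deriv (deriv g) 0 + c * g 0 - 96 * (g 0) ^ 2 with hd₂
  -- first integrals : R and S constant
  have hR : ∀ x, (deriv f x) ^ 2 - c * (f x) ^ 2 + 64 * (f x) ^ 3 - 2 * d₁ * f x
      = (deriv f 0) ^ 2 - c * (f 0) ^ 2 + 64 * (f 0) ^ 3 - 2 * d₁ * f 0 := by
    have hdiff : Differentiable ℝ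
        (fun x => (deriv f x) ^ 2 - c * (f x) ^ 2 + 64 * (f x) ^ 3 - 2 * d₁ * f x) :=
      (((hf1d.pow 2).sub ((hfd.pow 2).const_mul c)).add
        ((hfd.pow 3).const_mul 64)).sub (hfd.const_mul (2 * d₁))
    have hder : ∀ x, deriv
        (fun x => (deriv f x) ^ 2 - c * (f x) ^ 2 + 64 * (f x) ^ 3 - 2 * d₁ * f x)
        x = 0 := by
      intro x
      have Hd := ((((hf1d x).hasDerivAt.pow 2).sub
          ((((hfd x).hasDerivAt).pow 2).const_mul c)).add
          ((((hfd x).hasDerivAt).pow 3).const_mul (64 : ℝ))).sub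
          (((hfd x).hasDerivAt).const_mul (2 * d₁))
      refine Hd.deriv.trans ?_
      linear_combination 2 * deriv f x * (hP x)
    exact fun x => is_const_of_deriv_eq_zero hdiff hder x 0
  have hS : ∀ y, (deriv g y) ^ 2 + c * (g y) ^ 2 - 64 * (g y) ^ 3 - 2 * d₂ * g y
      = (deriv g 0) ^ 2 + c * (g 0) ^ 2 - 64 * (g 0) ^ 3 - 2 * d₂ * g 0 := by
    have hdiff : Differentiable ℝ
        (fun y => (deriv g y) ^ 2 + c * (g y) ^ 2 - 64 * (g y) ^ 3 - 2 * d₂ * g y) :=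
      (((hg1d.pow 2).add ((hgd.pow 2).const_mul c)).sub
        ((hgd.pow 3).const_mul 64)).sub (hgd.const_mul (2 * d₂))
    have hder : ∀ y, deriv
        (fun y => (deriv g y) ^ 2 + c * (g y) ^ 2 - 64 * (g y) ^ 3 - 2 * d₂ * g y)
        y = 0 := by
      intro y
      have Hd := ((((hg1d y).hasDerivAt.pow 2).add
          ((((hgd y).hasDerivAt).pow 2).const_mul c)).sub
          ((((hgd y).hasDerivAt).pow 3).const_mul (64 : ℝ))).sub
          (((hgd y).hasDerivAt).const_mul (2 * d₂))
      refine Hd.deriv.trans ?_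
      linear_combination 2 * deriv g y * (hQ y)
    exact fun y => is_const_of_deriv_eq_zero hdiff hder y 0
  set e₁ : ℝ := (deriv f 0) ^ 2 - c * (f 0) ^ 2 + 64 * (f 0) ^ 3 - 2 * d₁ * f 0 with he₁
  set e₂ : ℝ := (deriv g 0) ^ 2 + c * (g 0) ^ 2 - 64 * (g 0) ^ 3 - 2 * d₂ * g 0 with he₂
  -- compatibility with the original PDE
  have hKey : ∀ x y, (d₁ + d₂) * (f x + g y) + (e₁ + e₂) = 0 := by
    intro x y
    linear_combination (f x - g y) * (hP x) - (f x - g y) * (hQ y) - hR x - hS y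
      - hA x y
  have hd : d₁ + d₂ = 0 := by
    have h1 := hKey x₁ 0
    have h2 := hKey 0 0
    have h3 : (d₁ + d₂) * (f x₁ - f 0) = 0 := by linear_combination h1 - h2
    rcases mul_eq_zero.mp h3 with h' | h'
    · exact h'
    · exact absurd (sub_eq_zero.mp h') hx₁
  have he : e₁ + e₂ = 0 := by
    have h2 := hKey 0 0
    rw [hd] at h2
    linarith
  refine ⟨e₁ / 2, d₁ / 6, c / 48, fun x => ?_, fun y => ?_⟩
  · linear_combination hR x
  · linear_combination hS y + he + 2 * g y * hd
end

section
/- The function v ↦ v^{1/2}·(v·(√3/2 − v)·(v − √3/4))^{−1/2} is integrable on the open interval (√3/4, √3/2), and (1/2)·∫_{√3/4}^{√3/2} v^{1/2}·(v·(√3/2 − v)·(v − √3/4))^{−1/2} dv = π/2. -/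
open Real MeasureTheory

private lemma s3_pos : (0:ℝ) < Real.sqrt 3 := Real.sqrt_pos.mpr (by norm_num)

private lemma s3_sq : Real.sqrt 3 * Real.sqrt 3 = 3 :=
  Real.mul_self_sqrt (by norm_num)

private lemma aux_deriv {v : ℝ}
    (hv : v ∈ Set.Ioo (Real.sqrt 3 / 4) (Real.sqrt 3 / 2)) :
    HasDerivAt (fun x : ℝ => Real.arcsin ((8 / Real.sqrt 3) * x - 3))
      (1 / Real.sqrt ((Real.sqrt 3 / 2 - v) * (v - Real.sqrt 3 / 4))) v := by
  set s := Real.sqrt 3 with hs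
  have hs0 : (0:ℝ) < s := s3_pos
  have h8pos : (0:ℝ) < 8 / s := div_pos (by norm_num) hs0
  set y : ℝ := (8 / s) * v - 3 with hy
  have h1 : -1 < y := by
    rw [hy]
    have h2v : (2:ℝ) < 8 / s * v := by
      calc (2:ℝ) = 8 / s * (s / 4) := by field_simp; norm_num
        _ < 8 / s * v := by exact mul_lt_mul_of_pos_left hv.1 h8pos
    linarith
  have h2 : y < 1 := by
    rw [hy]
    have h4v : 8 / s * v < 4 := by
      calc 8 / s * v < 8 / s * (s / 2) := mul_lt_mul_of_pos_left hv.2 h8pos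
        _ = 4 := by field_simp; norm_num
    linarith
  have harc : HasDerivAt Real.arcsin (1 / Real.sqrt (1 - y ^ 2)) y :=
    Real.hasDerivAt_arcsin (by linarith) (by linarith)
  have haff : HasDerivAt (fun x : ℝ => (8 / s) * x - 3) (8 / s) v := by
    simpa using ((hasDerivAt_id v).const_mul (8 / s)).sub_const 3
  have hcomp := harc.comp v haff
  rw [Function.comp_def] at hcomp
  have hpq : (0:ℝ) < (s / 2 - v) * (v - s / 4) := by
    have h1' := hv.1; have h2' := hv.2
    apply mul_pos <;> linarith
  have key : 1 - y ^ 2 = (8 / s) ^ 2 * ((s / 2 - v) * (v - s / 4)) := by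
    have h3 : s ^ 2 = 3 := by rw [sq]; exact s3_sq
    rw [hy]
    field_simp
    nlinarith [h3]
  have heq : 1 / Real.sqrt (1 - y ^ 2) * (8 / s)
      = 1 / Real.sqrt ((s / 2 - v) * (v - s / 4)) := by
    rw [key, Real.sqrt_mul (sq_nonneg _), Real.sqrt_sq h8pos.le]
    rw [one_div, mul_inv, mul_comm ((8/s)⁻¹) _, mul_assoc,
      inv_mul_cancel₀ (ne_of_gt h8pos), mul_one, one_div]
  rw [heq] at hcomp
  exact hcomp

private lemma aux_eq {v : ℝ}
    (hv : v ∈ Set.Ioo (Real.sqrt 3 / 4) (Real.sqrt 3 / 2)) :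
    v ^ ((1:ℝ)/2)
        * (v * (Real.sqrt 3 / 2 - v) * (v - Real.sqrt 3 / 4)) ^ (-(1:ℝ)/2)
      = 1 / Real.sqrt ((Real.sqrt 3 / 2 - v) * (v - Real.sqrt 3 / 4)) := by
  set s := Real.sqrt 3 with hs
  have hs0 : (0:ℝ) < s := s3_pos
  have hv0 : 0 < v := lt_trans (div_pos hs0 (by norm_num)) hv.1
  have hp : 0 < s / 2 - v := by linarith [hv.2]
  have hq : 0 < v - s / 4 := by linarith [hv.1]
  have hX : (0:ℝ) ≤ v * (s / 2 - v) * (v - s / 4) :=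
    mul_nonneg (mul_nonneg hv0.le hp.le) hq.le
  have hneg : (-(1:ℝ)/2) = -((1:ℝ)/2) := by norm_num
  rw [hneg, Real.rpow_neg hX, ← Real.sqrt_eq_rpow, ← Real.sqrt_eq_rpow]
  rw [mul_assoc, Real.sqrt_mul hv0.le]
  have hsv : Real.sqrt v ≠ 0 := ne_of_gt (Real.sqrt_pos.mpr hv0)
  rw [mul_inv, ← mul_assoc, mul_inv_cancel₀ hsv, one_mul, one_div]

/-- The elliptic integral computing the total turning angle: the function
`v ↦ v^{1/2}·(v(√3/2 − v)(v − √3/4))^{−1/2}` is integrable on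
`(√3/4, √3/2)` and one half of its integral equals `π/2`. -/
theorem turning_angle_integral :
    IntegrableOn
      (fun v : ℝ => v ^ ((1:ℝ)/2)
        * (v * (Real.sqrt 3 / 2 - v) * (v - Real.sqrt 3 / 4)) ^ (-(1:ℝ)/2))
      (Set.Ioo (Real.sqrt 3 / 4) (Real.sqrt 3 / 2))
    ∧ (1/2) * ∫ v in Set.Ioo (Real.sqrt 3 / 4) (Real.sqrt 3 / 2),
        v ^ ((1:ℝ)/2)
          * (v * (Real.sqrt 3 / 2 - v) * (v - Real.sqrt 3 / 4)) ^ (-(1:ℝ)/2)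
      = π / 2 := by
  set s := Real.sqrt 3 with hs
  have hs0 : (0:ℝ) < s := s3_pos
  have hab : s / 4 < s / 2 := by linarith
  set f : ℝ → ℝ := fun v => v ^ ((1:ℝ)/2)
      * (v * (s / 2 - v) * (v - s / 4)) ^ (-(1:ℝ)/2) with hf
  set F : ℝ → ℝ := fun x => Real.arcsin ((8 / s) * x - 3) with hF
  have hderiv : ∀ v ∈ Set.Ioo (s/4) (s/2), HasDerivAt F (f v) v := by
    intro v hv
    have h2 : f v = 1 / Real.sqrt ((s / 2 - v) * (v - s / 4)) := aux_eq hv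
    rw [h2]
    exact aux_deriv hv
  have hcont : ContinuousOn F (Set.Icc (s/4) (s/2)) :=
    (Real.continuous_arcsin.comp (by continuity)).continuousOn
  have hpos : ∀ v ∈ Set.Ioo (s/4) (s/2), 0 ≤ f v := by
    intro v hv
    rw [show f v = _ from aux_eq hv]
    positivity
  have hint : IntegrableOn f (Set.Ioc (s/4) (s/2)) :=
    intervalIntegral.integrableOn_deriv_of_nonneg hcont hderiv hpos
  have hintIoo : IntegrableOn f (Set.Ioo (s/4) (s/2)) :=
    hint.mono_set Set.Ioo_subset_Ioc_self
  refine ⟨hintIoo, ?_⟩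
  have hii : IntervalIntegrable f volume (s/4) (s/2) := by
    rw [intervalIntegrable_iff_integrableOn_Ioc_of_le hab.le]; exact hint
  have hftc : ∫ v in (s/4)..(s/2), f v = F (s/2) - F (s/4) :=
    intervalIntegral.integral_eq_sub_of_hasDerivAt_of_le hab.le hcont hderiv hii
  have hFb : F (s/2) = π / 2 := by
    have h : (8 / s) * (s / 2) - 3 = 1 := by field_simp; norm_num
    show Real.arcsin ((8 / s) * (s/2) - 3) = π / 2
    rw [h, Real.arcsin_one]
  have hFa : F (s/4) = -(π / 2) := by
    have h : (8 / s) * (s / 4) - 3 = -1 := by field_simp; ring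
    show Real.arcsin ((8 / s) * (s/4) - 3) = -(π / 2)
    rw [h, Real.arcsin_neg_one]
  have hpi : ∫ v in Set.Ioo (s/4) (s/2), f v = π := by
    rw [← MeasureTheory.integral_Ioc_eq_integral_Ioo,
      ← intervalIntegral.integral_of_le hab.le, hftc, hFb, hFa]
    ring
  rw [hpi]; ring
end

section
/- Let r ∈ ℝ. Every element of the subgroup Γ of GL₃(ℂ) generated by h_X and h_Y is a block lower-triangular matrix of the form [[1, 0], [μ, Q]] (top-left entry 1, vanishing remainder of the first row), where the 2×2 block Q belongs to the eight-element set {±𝟏, ±𝐢, ±𝐣, ±𝐤} and the column μ ∈ ℂ² equals (a₀·𝟏 + a₁·𝐢 + a₂·𝐣 + a₃·𝐤)·v for some integers a₀, a₁, a₂, a₃ whose sum a₀ + a₁ + a₂ + a₃ is even. -/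
/-!
The matrices `[[1, 0], [μ, Q]]` multiply like affine maps: `(μ, Q)(μ', Q') = (μ + Q μ', Q Q')`.
Sending `a₀ + a₁i + a₂j + a₃k` to `a₀𝟏 + a₁𝐢 + a₂𝐣 + a₃𝐤` is an algebra embedding of the integral
quaternions `ℍ[ℤ]` into `M₂(ℂ)`, so for any left ideal `I` of `ℍ[ℤ]` the matrices with `Q = u`
a unit and `μ = b v`, `b ∈ I`, form a group (the affine group `x ↦ u x + b` of `I`). Both
generators lie in it: `h_X` has `(u, b) = (i, 1 + i)` and `h_Y` has `(j, 1 + j)`, and `1 + i`,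
`1 + j` lie in the left ideal of quaternions with even coordinate sum, which is an ideal because
the coordinate sum is multiplicative modulo 2. Finally a unit of `ℍ[ℤ]` has norm `1`, hence is
one of `±1, ±i, ±j, ±k`.
-/

open Matrix Complex

/-- The holonomy matrix `h_X`. -/
noncomputable def hX (r : ℝ) : Matrix (Fin 3) (Fin 3) ℂ :=
  !![1, 0, 0; (r : ℂ), 0, 1; (r : ℂ), -1, 0]

/-- The holonomy matrix `h_Y`. -/
noncomputable def hY (r : ℝ) : Matrix (Fin 3) (Fin 3) ℂ :=
  !![1, 0, 0; -Complex.I * (r : ℂ), 0, -Complex.I; (r : ℂ), -Complex.I, 0]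

/-- The quaternionic `2×2` matrices `𝟏, 𝐢, 𝐣, 𝐤`. -/
noncomputable def q1 : Matrix (Fin 2) (Fin 2) ℂ := !![1, 0; 0, 1]
noncomputable def qi : Matrix (Fin 2) (Fin 2) ℂ := !![0, 1; -1, 0]
noncomputable def qj : Matrix (Fin 2) (Fin 2) ℂ := !![0, -Complex.I; -Complex.I, 0]
noncomputable def qk : Matrix (Fin 2) (Fin 2) ℂ := !![-Complex.I, 0; 0, Complex.I]

/-- The vector `v = (0, r) ∈ ℂ²`. -/
noncomputable def vvec (r : ℝ) : Fin 2 → ℂ := ![0, (r : ℂ)]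

/-- The subgroup `Γ` of `GL₃(ℂ)` generated by `h_X` and `h_Y`. -/
noncomputable def Γgp (r : ℝ) : Subgroup (GL (Fin 3) ℂ) :=
  Subgroup.closure
    {g : GL (Fin 3) ℂ |
      (g : Matrix (Fin 3) (Fin 3) ℂ) = hX r ∨ (g : Matrix (Fin 3) (Fin 3) ℂ) = hY r}

section AffineBlock

variable {R : Type*} [CommRing R] {n : ℕ}

def affineBlock (μ : Fin n → R) (Q : Matrix (Fin n) (Fin n) R) :
    Matrix (Fin (n + 1)) (Fin (n + 1)) R :=
  Matrix.of (vecCons (vecCons 1 0) fun i => vecCons (μ i) (Q i))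

@[simp] lemma affineBlock_zero_zero (μ : Fin n → R) (Q : Matrix (Fin n) (Fin n) R) :
    affineBlock μ Q 0 0 = 1 := rfl

@[simp] lemma affineBlock_zero_succ (μ : Fin n → R) (Q : Matrix (Fin n) (Fin n) R) (j : Fin n) :
    affineBlock μ Q 0 j.succ = 0 := by simp [affineBlock]

@[simp] lemma affineBlock_succ_zero (μ : Fin n → R) (Q : Matrix (Fin n) (Fin n) R) (i : Fin n) :
    affineBlock μ Q i.succ 0 = μ i := by simp [affineBlock]

@[simp] lemma affineBlock_succ_succ (μ : Fin n → R) (Q : Matrix (Fin n) (Fin n) R)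
    (i j : Fin n) : affineBlock μ Q i.succ j.succ = Q i j := by simp [affineBlock]

lemma affineBlock_zero_one : affineBlock (0 : Fin n → R) 1 = 1 := by
  ext i j
  cases i using Fin.cases <;> cases j using Fin.cases <;>
    simp [Matrix.one_apply, (Fin.succ_ne_zero _).symm]

lemma affineBlock_mul_affineBlock (μ μ' : Fin n → R) (Q Q' : Matrix (Fin n) (Fin n) R) :
    affineBlock μ Q * affineBlock μ' Q' = affineBlock (μ + Q *ᵥ μ') (Q * Q') := by
  ext i j
  cases i using Fin.cases <;> cases j using Fin.cases <;>
    simp [Matrix.mul_apply, Fin.sum_univ_succ, mulVec, dotProduct, add_comm]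

end AffineBlock

section AffineSubgroup

variable {S R : Type*} [Ring S] [CommRing R] {n : ℕ}

lemma affineBlock_map_mul (φ : S →+* Matrix (Fin n) (Fin n) R) (v : Fin n → R) (u b u' b' : S) :
    affineBlock (φ b *ᵥ v) (φ u) * affineBlock (φ b' *ᵥ v) (φ u') =
      affineBlock (φ (b + u * b') *ᵥ v) (φ (u * u')) := by
  rw [affineBlock_mul_affineBlock, map_add, map_mul, map_mul, add_mulVec, mulVec_mulVec]

def affineSubgroup (φ : S →+* Matrix (Fin n) (Fin n) R) (I : Ideal S) (v : Fin n → R) :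
    Subgroup (GL (Fin (n + 1)) R) where
  carrier := {g | ∃ u b, IsUnit u ∧ b ∈ I ∧ (g : Matrix _ _ R) = affineBlock (φ b *ᵥ v) (φ u)}
  mul_mem' := by
    rintro g g' ⟨u, b, hu, hb, hg⟩ ⟨u', b', hu', hb', hg'⟩
    exact ⟨u * u', b + u * b', hu.mul hu', I.add_mem hb (I.mul_mem_left u hb'),
      by rw [Units.val_mul, hg, hg', affineBlock_map_mul]⟩
  one_mem' := ⟨1, 0, isUnit_one, I.zero_mem, by simp [affineBlock_zero_one]⟩
  inv_mem' := by
    rintro g ⟨_, b, ⟨w, rfl⟩, hb, hg⟩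
    refine ⟨↑w⁻¹, -(↑w⁻¹ * b), Units.isUnit _, I.neg_mem (I.mul_mem_left _ hb), ?_⟩
    have hinv : (g : Matrix _ _ R) * affineBlock (φ (-(↑w⁻¹ * b)) *ᵥ v) (φ ↑w⁻¹) = 1 := by
      rw [hg, affineBlock_map_mul, mul_neg, ← mul_assoc, Units.mul_inv, one_mul, add_neg_cancel,
        map_zero, map_one, zero_mulVec, affineBlock_zero_one]
    rw [Matrix.coe_units_inv, Matrix.inv_eq_right_inv hinv]

end AffineSubgroup

open Quaternion

namespace Quaternion

def coordSum (a : ℍ[ℤ]) : ℤ := a.re + a.imI + a.imJ + a.imK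

lemma coordSum_add (a b : ℍ[ℤ]) : coordSum (a + b) = coordSum a + coordSum b := by
  simp only [coordSum, re_add, imI_add, imJ_add, imK_add]
  ring

lemma coordSum_mul (a b : ℍ[ℤ]) :
    coordSum (a * b) = coordSum a * coordSum b
      - 2 * (a.imI * (b.imI + b.imK) + a.imJ * (b.imI + b.imJ) + a.imK * (b.imJ + b.imK)) := by
  simp only [coordSum, re_mul, imI_mul, imJ_mul, imK_mul]
  ring

def evenCoordSumIdeal : Ideal ℍ[ℤ] where
  carrier := {b | Even (coordSum b)}
  add_mem' {a b} ha hb := by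
    change Even (coordSum (a + b))
    rw [coordSum_add]
    exact ha.add hb
  zero_mem' := by simp [coordSum]
  smul_mem' a b hb := by
    change Even (coordSum (a * b))
    rw [coordSum_mul]
    exact (hb.mul_left _).sub (even_two_mul _)

lemma mem_evenCoordSumIdeal {b : ℍ[ℤ]} : b ∈ evenCoordSumIdeal ↔ Even (coordSum b) := Iff.rfl

lemma isUnit_iff_normSq_eq_one {u : ℍ[ℤ]} : IsUnit u ↔ normSq u = 1 := by
  constructor
  · intro hu
    rcases Int.isUnit_iff.mp (hu.map normSq) with h | h
    · exact h
    · linarith [normSq_nonneg (a := u)]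
  · intro hu
    exact ⟨⟨u, star u, by simp [self_mul_star, hu], by simp [star_mul_self, hu]⟩, rfl⟩

end Quaternion

noncomputable def quatMatrixBasis :
    QuaternionAlgebra.Basis (Matrix (Fin 2) (Fin 2) ℂ) (-1 : ℤ) 0 (-1) where
  i := qi
  j := qj
  k := qk
  i_mul_i := by ext i j; fin_cases i <;> fin_cases j <;> simp [qi]
  j_mul_j := by ext i j; fin_cases i <;> fin_cases j <;> simp [qj]
  i_mul_j := by ext i j; fin_cases i <;> fin_cases j <;> simp [qi, qj, qk]
  j_mul_i := by ext i j; fin_cases i <;> fin_cases j <;> simp [qi, qj, qk]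

noncomputable def quatMatrix : ℍ[ℤ] →ₐ[ℤ] Matrix (Fin 2) (Fin 2) ℂ :=
  QuaternionAlgebra.lift quatMatrixBasis

lemma quatMatrix_apply (a : ℍ[ℤ]) :
    quatMatrix a = a.re • q1 + a.imI • qi + a.imJ • qj + a.imK • qk := by
  rw [q1, ← Matrix.one_fin_two, ← Algebra.algebraMap_eq_smul_one]
  rfl

lemma quatMatrix_mem_of_normSq_eq_one {u : ℍ[ℤ]} (hu : normSq u = 1) :
    quatMatrix u ∈ ({q1, -q1, qi, -qi, qj, -qj, qk, -qk} : Set (Matrix (Fin 2) (Fin 2) ℂ)) := by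
  have coord : ∀ t : ℤ, t ^ 2 ≤ 1 → t = -1 ∨ t = 0 ∨ t = 1 := fun t ht => by
    have : -1 ≤ t ∧ t ≤ 1 := by constructor <;> nlinarith
    omega
  rw [normSq_def'] at hu
  rw [quatMatrix_apply]
  rcases coord u.re (by nlinarith) with h₀ | h₀ | h₀ <;>
  rcases coord u.imI (by nlinarith) with h₁ | h₁ | h₁ <;>
  rcases coord u.imJ (by nlinarith) with h₂ | h₂ | h₂ <;>
  rcases coord u.imK (by nlinarith) with h₃ | h₃ | h₃ <;>
  simp [h₀, h₁, h₂, h₃] at hu ⊢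

def quatI : ℍ[ℤ] := ⟨0, 1, 0, 0⟩

def quatJ : ℍ[ℤ] := ⟨0, 0, 1, 0⟩

lemma normSq_quatI : normSq quatI = 1 := by
  rw [normSq_def']
  simp [quatI]

lemma normSq_quatJ : normSq quatJ = 1 := by
  rw [normSq_def']
  simp [quatJ]

lemma one_add_quatI_mem : 1 + quatI ∈ evenCoordSumIdeal := by
  rw [mem_evenCoordSumIdeal, coordSum_add]
  exact ⟨1, by simp [coordSum, quatI]⟩

lemma one_add_quatJ_mem : 1 + quatJ ∈ evenCoordSumIdeal := by
  rw [mem_evenCoordSumIdeal, coordSum_add]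
  exact ⟨1, by simp [coordSum, quatJ]⟩

lemma quatMatrix_quatI : quatMatrix quatI = qi := by
  rw [quatMatrix_apply]
  simp [quatI]

lemma quatMatrix_quatJ : quatMatrix quatJ = qj := by
  rw [quatMatrix_apply]
  simp [quatJ]

lemma hX_eq_affineBlock (r : ℝ) :
    hX r = affineBlock (quatMatrix (1 + quatI) *ᵥ vvec r) (quatMatrix quatI) := by
  rw [map_add, map_one, quatMatrix_quatI, add_mulVec, one_mulVec]
  ext i j
  fin_cases i <;> fin_cases j <;> simp [hX, affineBlock, qi, vvec, vecHead, vecTail]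

lemma hY_eq_affineBlock (r : ℝ) :
    hY r = affineBlock (quatMatrix (1 + quatJ) *ᵥ vvec r) (quatMatrix quatJ) := by
  rw [map_add, map_one, quatMatrix_quatJ, add_mulVec, one_mulVec]
  ext i j
  fin_cases i <;> fin_cases j <;> simp [hY, affineBlock, qj, vvec, vecHead, vecTail, mul_comm]

lemma Γgp_le_affineSubgroup (r : ℝ) :
    Γgp r ≤ affineSubgroup (quatMatrix : ℍ[ℤ] →+* _) evenCoordSumIdeal (vvec r) := by
  refine (Subgroup.closure_le _).mpr ?_
  rintro g (hg | hg)
  · exact ⟨quatI, 1 + quatI, isUnit_iff_normSq_eq_one.mpr normSq_quatI, one_add_quatI_mem,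
      by rw [hg, hX_eq_affineBlock]; rfl⟩
  · exact ⟨quatJ, 1 + quatJ, isUnit_iff_normSq_eq_one.mpr normSq_quatJ, one_add_quatJ_mem,
      by rw [hg, hY_eq_affineBlock]; rfl⟩

/-- Every element of `Γ` is block lower-triangular of the form
`[[1,0],[μ,Q]]` with `Q ∈ {±𝟏, ±𝐢, ±𝐣, ±𝐤}` and
`μ = (a₀𝟏 + a₁𝐢 + a₂𝐣 + a₃𝐤)·v` for integers `aᵢ` with even sum. -/
theorem gamma_block_structure (r : ℝ) :
    ∀ g ∈ Γgp r,
      ∃ Q ∈ ({q1, -q1, qi, -qi, qj, -qj, qk, -qk} :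
              Set (Matrix (Fin 2) (Fin 2) ℂ)),
        ∃ a₀ a₁ a₂ a₃ : ℤ, Even (a₀ + a₁ + a₂ + a₃) ∧
          (g : Matrix (Fin 3) (Fin 3) ℂ) 0 0 = 1 ∧
          (g : Matrix (Fin 3) (Fin 3) ℂ) 0 1 = 0 ∧
          (g : Matrix (Fin 3) (Fin 3) ℂ) 0 2 = 0 ∧
          (∀ i j : Fin 2, (g : Matrix (Fin 3) (Fin 3) ℂ) i.succ j.succ = Q i j) ∧
          (∀ i : Fin 2, (g : Matrix (Fin 3) (Fin 3) ℂ) i.succ 0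
            = ((a₀ • q1 + a₁ • qi + a₂ • qj + a₃ • qk) *ᵥ vvec r) i) := by
  intro g hg
  obtain ⟨u, b, hu, hb, hg⟩ := Γgp_le_affineSubgroup r hg
  refine ⟨quatMatrix u, quatMatrix_mem_of_normSq_eq_one (isUnit_iff_normSq_eq_one.mp hu),
    b.re, b.imI, b.imJ, b.imK, mem_evenCoordSumIdeal.mp hb, ?_, ?_, ?_, ?_, ?_⟩
  · simp [hg]
  · exact hg ▸ affineBlock_zero_succ _ _ 0
  · exact hg ▸ affineBlock_zero_succ _ _ 1
  · simp [hg]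
  · simp [hg, quatMatrix_apply]
end

section
/- Let r > 0 be real. The subgroup Γ of GL₃(ℂ) generated by h_X and h_Y is discrete: every element of Γ is an isolated point of Γ in the topology of 3×3 complex matrices (equivalently, there is ε > 0 such that any two distinct elements of Γ are at distance at least ε). -/
open Matrix Complex

/-!
Conjugation by `diag(r, 1, 1)` divides the entries `r` and `-i r` in the first columns of `h_X`
and `h_Y` by `r` and leaves the other entries alone, so it maps both generators to matrices of
determinant `1` with Gaussian integer entries. Hence `Γ` is conjugate to a subgroup of
`GL₃(ℤ[i])`, which is discrete because distinct Gaussian integers are at distance at least `1`.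
-/

namespace GaussianInt

theorem one_le_norm_toComplex {x : GaussianInt} (hx : x ≠ 0) : 1 ≤ ‖(x : ℂ)‖ := by
  have h : (1 : ℝ) ≤ ‖(x : ℂ)‖ ^ 2 := by
    rw [Complex.sq_norm, ← intCast_real_norm]
    exact_mod_cast norm_pos.2 hx
  nlinarith [_root_.norm_nonneg (x : ℂ)]

theorem eq_of_norm_toComplex_sub_lt_one {x y : GaussianInt} (h : ‖(x : ℂ) - y‖ < 1) :
    x = y := by
  by_contra hxy
  have := one_le_norm_toComplex (sub_ne_zero.2 hxy)
  rw [toComplex_sub] at this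
  linarith

end GaussianInt

open GaussianInt

variable {n : Type*} [Fintype n] [DecidableEq n]

theorem conj_mem_range_map_toComplex {t g : GL n ℂ} {N : Matrix n n GaussianInt}
    (hN : IsUnit N.det) (h : (t : Matrix n n ℂ) * g = N.map toComplex * t) :
    MulAut.conj t g ∈ (GeneralLinearGroup.map toComplex).range := by
  refine ⟨GeneralLinearGroup.mk'' N hN, ?_⟩
  rw [MulAut.conj_apply, eq_mul_inv_iff_mul_eq]
  ext : 1
  simpa using h.symm

theorem Subgroup.isolated_of_le_comap_conj_range_map_toComplex {G : Subgroup (GL n ℂ)}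
    (t : GL n ℂ)
    (hG : G ≤ (GeneralLinearGroup.map toComplex).range.comap (MulAut.conj t).toMonoidHom) :
    ∀ g ∈ G, ∃ U : Set (Matrix n n ℂ), IsOpen U ∧ (g : Matrix n n ℂ) ∈ U ∧
      ∀ g' ∈ G, (g' : Matrix n n ℂ) ∈ U → g' = g := by
  intro g hg
  let c : Matrix n n ℂ → Matrix n n ℂ := fun M => t * M * ((t⁻¹ : GL n ℂ) : Matrix n n ℂ)
  refine ⟨{M | ∀ i j, ‖c M i j - c g i j‖ < 1}, ?_, by simp, fun g' hg' hU => ?_⟩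
  · simp only [Set.ofPred_forall]
    exact isOpen_iInter_of_finite fun i => isOpen_iInter_of_finite fun j =>
      isOpen_lt (((continuous_const.matrix_mul continuous_id).matrix_mul
        continuous_const).matrix_elem i j |>.sub continuous_const |>.norm) continuous_const
  · obtain ⟨N, hN⟩ := hG hg
    obtain ⟨N', hN'⟩ := hG hg'
    have hc : ∀ {h : GL n ℂ} {K : GL n GaussianInt},
        GeneralLinearGroup.map toComplex K = MulAut.conj t h → ∀ i j, c h i j = K i j := by
      intro h K hK i j
      rw [← GeneralLinearGroup.map_apply, hK]
      rfl
    suffices N' = N from (MulAut.conj t).injective (by simpa [this, hN] using hN'.symm)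
    refine GeneralLinearGroup.ext fun i j => eq_of_norm_toComplex_sub_lt_one ?_
    simpa only [hc hN, hc hN'] using hU i j

theorem Γgp_le_comap_conj_range_map_toComplex {r : ℝ} (hr : r ≠ 0) :
    ∃ t : GL (Fin 3) ℂ,
      Γgp r ≤ (GeneralLinearGroup.map toComplex).range.comap (MulAut.conj t).toMonoidHom := by
  refine ⟨GeneralLinearGroup.mkOfDetNeZero (diagonal ![(r : ℂ), 1, 1])
    (by simp [Fin.prod_univ_three, hr]), ?_⟩
  rw [Γgp, Subgroup.closure_le]
  rintro g (hg | hg)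
  · refine conj_mem_range_map_toComplex (N := !![1, 0, 0; 1, 0, 1; 1, -1, 0])
      (by simp [det_fin_three]) ?_
    rw [hg]
    ext i j
    fin_cases i <;> fin_cases j <;> simp [hX]
  · refine conj_mem_range_map_toComplex (N := !![1, 0, 0; -⟨0, 1⟩, 0, -⟨0, 1⟩; 1, -⟨0, 1⟩, 0])
      (by simpa [det_fin_three] using
        IsUnit.of_mul_eq_one (a := (⟨0, 1⟩ : GaussianInt)) (-⟨0, 1⟩) (by decide)) ?_
    rw [hg]
    ext i j
    fin_cases i <;> fin_cases j <;> simp [hY, toComplex_def']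

/-- For `r > 0`, the subgroup `Γ` generated by `h_X` and `h_Y` is discrete:
every element of `Γ` is an isolated point of `Γ` in the topology of `3×3`
complex matrices. -/
theorem gamma_discrete (r : ℝ) (hr : 0 < r) :
    ∀ g ∈ Γgp r, ∃ U : Set (Matrix (Fin 3) (Fin 3) ℂ), IsOpen U ∧
      (g : Matrix (Fin 3) (Fin 3) ℂ) ∈ U ∧
      ∀ g' ∈ Γgp r, (g' : Matrix (Fin 3) (Fin 3) ℂ) ∈ U → g' = g := by
  obtain ⟨t, ht⟩ := Γgp_le_comap_conj_range_map_toComplex hr.ne'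
  exact Subgroup.isolated_of_le_comap_conj_range_map_toComplex t ht
end

section
/- Let λ be an irrational real number. Then the set Σ_λ = {(e^{w+r}, e^{λ·w}) : w ∈ ℂ, r ∈ ℝ} is dense in ℂ². -/
/-!
A point of `Σ_λ` with second coordinate `e^β` has `w = (β + 2πik)/λ` for some `k ∈ ℤ`, and then
its first coordinate ranges over `e^{β/λ + t + i(2πk/λ + 2πm)}`, `t ∈ ℝ`, `m ∈ ℤ`. Since `λ` is
irrational, the angles `2πk/λ + 2πm` are dense in `ℝ`; hence `Σ_λ` contains the image of a dense set
under the continuous map `(z, β) ↦ (e^{z + β/λ}, e^β)`, whose range `ℂ* × ℂ*` is dense in `ℂ²`.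
-/

open Complex Set

lemma denseRange_exp_add_mul_prod_exp (c : ℂ) :
    DenseRange fun p : ℂ × ℂ => (exp (p.1 + c * p.2), exp p.2) := by
  refine ((dense_compl_singleton 0).prod (dense_compl_singleton 0)).mono ?_
  rintro ⟨u, v⟩ ⟨hu, hv⟩
  refine ⟨(log u - c * log v, log v), ?_⟩
  simp only [sub_add_cancel, exp_log hu, exp_log (mem_compl_singleton_iff.mp hv)]

lemma dense_addSubgroupClosure_div_pair {a l : ℝ} (ha : a ≠ 0) (hl : Irrational l) :
    Dense (AddSubgroup.closure {a / l, a} : Set ℝ) := by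
  rw [dense_addSubgroupClosure_pair_iff, div_right_comm, div_self ha, one_div]
  exact hl.inv

lemma exists_exp_add_ofReal_eq {l : ℝ} (hl : l ≠ 0) {z : ℂ}
    (hz : z.im ∈ AddSubgroup.closure {2 * Real.pi / l, 2 * Real.pi}) (β : ℂ) :
    ∃ w : ℂ, ∃ r : ℝ,
      (exp (z + (l : ℂ)⁻¹ * β), exp β) = (exp (w + r), exp ((l : ℂ) * w)) := by
  obtain ⟨k, m, hkm⟩ := AddSubgroup.mem_closure_pair.mp hz
  refine ⟨(l : ℂ)⁻¹ * (β + k * (2 * Real.pi * I)), z.re, ?_⟩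
  have hl' : (l : ℂ) ≠ 0 := ofReal_ne_zero.mpr hl
  rw [Prod.mk.injEq, mul_inv_cancel_left₀ hl', exp_add β, exp_int_mul_two_pi_mul_I, mul_one]
  refine ⟨?_, rfl⟩
  have hperiod : z + (l : ℂ)⁻¹ * β =
      (l : ℂ)⁻¹ * (β + k * (2 * Real.pi * I)) + z.re + m * (2 * Real.pi * I) := by
    conv_lhs => rw [← re_add_im z, ← hkm]
    simp only [zsmul_eq_mul]
    push_cast
    field_simp
    ring
  rw [hperiod, exp_add _ (m * _), exp_int_mul_two_pi_mul_I, mul_one]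

/-- For irrational `λ`, the minimal Levi-flat hypersurface
`Σ_λ = {(e^{w+r}, e^{λw}) : w ∈ ℂ, r ∈ ℝ}` is dense in `ℂ²`. -/
theorem sigma_lambda_dense (l : ℝ) (hl : Irrational l) :
    Dense {p : ℂ × ℂ | ∃ w : ℂ, ∃ r : ℝ,
      p = (Complex.exp (w + (r : ℂ)), Complex.exp ((l : ℂ) * w))} := by
  have hD : Dense ((im ⁻¹' (AddSubgroup.closure {2 * Real.pi / l, 2 * Real.pi} : Set ℝ)) ×ˢ
      (univ : Set ℂ)) :=
    ((dense_addSubgroupClosure_div_pair Real.two_pi_pos.ne' hl).preimage isOpenMap_im).prod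
      dense_univ
  refine ((denseRange_exp_add_mul_prod_exp (l : ℂ)⁻¹).dense_image (by fun_prop) hD).mono ?_
  rintro _ ⟨⟨z, β⟩, ⟨hz, -⟩, rfl⟩
  exact exists_exp_add_ofReal_eq hl.ne_zero hz β
end

section
/- Fix θ ∈ (−π/2, π/2), let 2ρ₀ > 0, and let v : [0, 2ρ₀] → ℝ be a continuous positive function satisfying the symmetry v(2ρ₀ − t) = v(t) for all t ∈ [0, 2ρ₀]. Let φ : [0, 2ρ₀] → ℝ be defined by φ(x) = ∫₀ˣ 2·√(v(t)) dt, and suppose φ(2ρ₀) = π/2. Then φ(2ρ₀ − x) = π/2 − φ(x) for all x ∈ [0, 2ρ₀], and consequently ∫₀^{2ρ₀} sin(φ(x))·v(x)^{−1/4} dx = ∫₀^{2ρ₀} cos(φ(x))·v(x)^{−1/4} dx; that is, the two translation components u₁(2ρ₀) and u₂(2ρ₀) of the holonomy matrix are equal. -/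
open Real MeasureTheory intervalIntegral

/-- Symmetry of the turning angle and equality of the two translation
components of the holonomy: if `v > 0` is continuous on `[0, 2ρ₀]` with
`v(2ρ₀ − t) = v(t)`, `φ(x) = ∫₀ˣ 2√(v(t)) dt` and `φ(2ρ₀) = π/2`, then
`φ(2ρ₀ − x) = π/2 − φ(x)` and
`∫₀^{2ρ₀} sin(φ(x)) v(x)^{−1/4} dx = ∫₀^{2ρ₀} cos(φ(x)) v(x)^{−1/4} dx`. -/
theorem holonomy_translation_components_equal
    (θ : ℝ) (hθ : θ ∈ Set.Ioo (-(π/2)) (π/2))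
    (ρ₀ : ℝ) (hρ : 0 < 2 * ρ₀)
    (v : ℝ → ℝ) (hv : ContinuousOn v (Set.Icc 0 (2 * ρ₀)))
    (hvpos : ∀ t ∈ Set.Icc 0 (2 * ρ₀), 0 < v t)
    (hvsym : ∀ t ∈ Set.Icc 0 (2 * ρ₀), v (2 * ρ₀ - t) = v t)
    (φ : ℝ → ℝ)
    (hφ : ∀ x ∈ Set.Icc 0 (2 * ρ₀),
      φ x = ∫ t in (0:ℝ)..x, 2 * Real.sqrt (v t))
    (hφend : φ (2 * ρ₀) = π / 2) :
    (∀ x ∈ Set.Icc 0 (2 * ρ₀), φ (2 * ρ₀ - x) = π / 2 - φ x)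
    ∧ (∫ x in (0:ℝ)..(2 * ρ₀), Real.sin (φ x) * (v x) ^ (-(1:ℝ)/4))
      = ∫ x in (0:ℝ)..(2 * ρ₀), Real.cos (φ x) * (v x) ^ (-(1:ℝ)/4) := by
  have h2ρ : (0:ℝ) ≤ 2 * ρ₀ := hρ.le
  have part1 : ∀ x ∈ Set.Icc 0 (2 * ρ₀), φ (2 * ρ₀ - x) = π / 2 - φ x := by
    intro x hx
    obtain ⟨hx0, hx2⟩ := hx
    have hmem : 2 * ρ₀ - x ∈ Set.Icc 0 (2 * ρ₀) := ⟨by linarith, by linarith⟩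
    have hInt : ∀ a b, a ∈ Set.Icc 0 (2*ρ₀) → b ∈ Set.Icc 0 (2*ρ₀) →
        IntervalIntegrable (fun t => 2 * Real.sqrt (v t)) volume a b := by
      intro a b ha hb
      apply ContinuousOn.intervalIntegrable
      exact (continuousOn_const.mul hv.sqrt).mono (Set.uIcc_subset_Icc ha hb)
    have hadd : (∫ t in (0:ℝ)..(2*ρ₀ - x), 2 * Real.sqrt (v t))
        + (∫ t in (2*ρ₀ - x)..(2*ρ₀), 2 * Real.sqrt (v t))
        = ∫ t in (0:ℝ)..(2*ρ₀), 2 * Real.sqrt (v t) :=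
      intervalIntegral.integral_add_adjacent_intervals
        (hInt 0 _ ⟨le_rfl, h2ρ⟩ hmem) (hInt _ _ hmem ⟨h2ρ, le_rfl⟩)
    have hsub : (∫ t in (2*ρ₀ - x)..(2*ρ₀), 2 * Real.sqrt (v t))
        = ∫ t in (0:ℝ)..x, 2 * Real.sqrt (v t) := by
      have hc := intervalIntegral.integral_comp_sub_left (a := 0) (b := x)
        (fun t => 2 * Real.sqrt (v t)) (2*ρ₀)
      rw [sub_zero] at hc
      rw [← hc]
      apply intervalIntegral.integral_congr
      intro t ht
      rw [Set.uIcc_of_le hx0] at ht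
      have ht' : t ∈ Set.Icc 0 (2*ρ₀) := ⟨ht.1, le_trans ht.2 hx2⟩
      simp [hvsym t ht']
    have e1 := hφ _ hmem
    have e2 := hφ x ⟨hx0, hx2⟩
    have e3 := hφ (2*ρ₀) ⟨h2ρ, le_rfl⟩
    rw [hφend] at e3
    linarith
  refine ⟨part1, ?_⟩
  have key := intervalIntegral.integral_comp_sub_left (a := 0) (b := 2*ρ₀)
    (fun x => Real.sin (φ x) * (v x) ^ (-(1:ℝ)/4)) (2*ρ₀)
  rw [sub_zero, sub_self] at key
  rw [← key]
  apply intervalIntegral.integral_congr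
  intro x hx
  rw [Set.uIcc_of_le h2ρ] at hx
  simp only
  rw [part1 x hx, hvsym x hx, Real.sin_pi_div_two_sub]
end
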